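/- arXiv:2103.07959 — 8 statements merged into one kernel-verified Lean document; each statement's English description precedes it below -/
import Mathlib

section
/- (Cluster Lemma) Let Y be a family of finite subsets of a set V, and suppose Y = ⋃_{q ∈ Q} Y_q is a partition indexed by a poset Q such that whenever σ ∈ Y_q, σ' ∈ Y_{q'}, and σ' ⊆ σ, then q' ≤ q. If A_q is an acyclic matching of G_{Y_q} for each q ∈ Q, then A = ⋃_{q ∈ Q} A_q is an acyclic matching of G_Y. -/
variable {V : Type*} [DecidableEq V]

/-- An edge of the directed graph `G_Y`: `p.1 → p.2` with `p.2 ⊆ p.1` and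
`|p.1| = |p.2| + 1`, both cells in `Y`. -/
def IsEdge (Y : Set (Finset V)) (p : Finset V × Finset V) : Prop :=
  p.1 ∈ Y ∧ p.2 ∈ Y ∧ p.2 ⊆ p.1 ∧ p.1.card = p.2.card + 1

/-- `A` is a matching of `G_Y`: a set of edges so that each cell of `Y`
occurs in at most one edge of `A`. -/
def IsMatching (Y : Set (Finset V)) (A : Set (Finset V × Finset V)) : Prop :=
  (∀ p ∈ A, IsEdge Y p) ∧
    ∀ p ∈ A, ∀ q ∈ A, p ≠ q →
      p.1 ≠ q.1 ∧ p.1 ≠ q.2 ∧ p.2 ≠ q.1 ∧ p.2 ≠ q.2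

/-- The edge relation of the modified graph `G_Y^A`: edges of `G_Y` not in `A`
(pointing down), together with the reversals of the edges of `A` (pointing up). -/
def MStep (Y : Set (Finset V)) (A : Set (Finset V × Finset V))
    (σ τ : Finset V) : Prop :=
  (IsEdge Y (σ, τ) ∧ (σ, τ) ∉ A) ∨ (τ, σ) ∈ A

/-- `A` is an acyclic matching of `G_Y`: a matching such that the modified
graph `G_Y^A` has no directed cycles. -/
def IsAcyclicMatching (Y : Set (Finset V)) (A : Set (Finset V × Finset V)) : Prop :=
  IsMatching Y A ∧ ∀ σ, ¬ Relation.TransGen (MStep Y A) σ σ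

/-- Cluster Lemma: if `Y = ⋃_{p ∈ Q} Y p` is a partition indexed
by a poset `Q` such that `σ' ⊆ σ` with `σ ∈ Y p`, `σ' ∈ Y p'` forces `p' ≤ p`,
and each `A p` is an acyclic matching of `G_{Y p}`, then `⋃ p, A p` is an
acyclic matching of `G_{⋃ p, Y p}`. -/
theorem stmt3 {Q : Type*} [PartialOrder Q] (Y : Q → Set (Finset V))
    (hdisj : ∀ p p' : Q, p ≠ p' → Disjoint (Y p) (Y p'))
    (horder : ∀ (p p' : Q) (σ σ' : Finset V),
      σ ∈ Y p → σ' ∈ Y p' → σ' ⊆ σ → p' ≤ p)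
    (A : Q → Set (Finset V × Finset V))
    (hA : ∀ p, IsAcyclicMatching (Y p) (A p)) :
    IsAcyclicMatching (⋃ p, Y p) (⋃ p, A p) := by
  have huniq : ∀ {p p' : Q} {σ : Finset V}, σ ∈ Y p → σ ∈ Y p' → p = p' := by
    intro p p' σ h h'
    by_contra hne
    exact Set.disjoint_left.1 (hdisj p p' hne) h h'
  have hmem : ∀ {σ τ : Finset V}, MStep (⋃ p, Y p) (⋃ p, A p) σ τ →
      ∃ p p', σ ∈ Y p ∧ τ ∈ Y p' ∧ p' ≤ p := by
    rintro σ τ (⟨⟨h1, h2, hsub, _⟩, _⟩ | hA')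
    · obtain ⟨p, hp⟩ := Set.mem_iUnion.1 h1
      obtain ⟨p', hp'⟩ := Set.mem_iUnion.1 h2
      exact ⟨p, p', hp, hp', horder p p' σ τ hp hp' hsub⟩
    · obtain ⟨q, hq⟩ := Set.mem_iUnion.1 hA'
      obtain ⟨h1, h2, -, -⟩ := (hA q).1.1 _ hq
      exact ⟨q, q, h2, h1, le_refl q⟩
  have hrestrict : ∀ {p : Q} {σ τ : Finset V}, σ ∈ Y p → τ ∈ Y p →
      MStep (⋃ q, Y q) (⋃ q, A q) σ τ → MStep (Y p) (A p) σ τ := by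
    rintro p σ τ hσ hτ (⟨⟨-, -, hsub, hcard⟩, hnA⟩ | hA')
    · exact Or.inl ⟨⟨hσ, hτ, hsub, hcard⟩,
        fun h => hnA (Set.mem_iUnion.2 ⟨p, h⟩)⟩
    · obtain ⟨q, hq⟩ := Set.mem_iUnion.1 hA'
      obtain ⟨-, h2, -, -⟩ := (hA q).1.1 _ hq
      exact Or.inr ((huniq h2 hσ : q = p) ▸ hq)
  constructor
  · constructor
    · rintro e he
      obtain ⟨q, hq⟩ := Set.mem_iUnion.1 he
      obtain ⟨h1, h2, h3, h4⟩ := (hA q).1.1 _ hq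
      exact ⟨Set.mem_iUnion.2 ⟨q, h1⟩, Set.mem_iUnion.2 ⟨q, h2⟩, h3, h4⟩
    · rintro e he f hf hne
      obtain ⟨q, hq⟩ := Set.mem_iUnion.1 he
      obtain ⟨q', hq'⟩ := Set.mem_iUnion.1 hf
      by_cases hqq : q = q'
      · subst hqq
        exact (hA q).1.2 e hq f hq' hne
      · obtain ⟨h1, h2, -, -⟩ := (hA q).1.1 _ hq
        obtain ⟨h1', h2', -, -⟩ := (hA q').1.1 _ hq'
        have hd := Set.disjoint_left.1 (hdisj q q' hqq)
        exact ⟨fun h => hd h1 (h ▸ h1'), fun h => hd h1 (h ▸ h2'),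
          fun h => hd h2 (h ▸ h1'), fun h => hd h2 (h ▸ h2')⟩
  · have key : ∀ {σ τ : Finset V},
        Relation.TransGen (MStep (⋃ p, Y p) (⋃ p, A p)) σ τ →
        ∃ p p', σ ∈ Y p ∧ τ ∈ Y p' ∧ p' ≤ p ∧
          (p' = p → Relation.TransGen (MStep (Y p) (A p)) σ τ) := by
      intro σ τ h
      induction h with
      | single hstep =>
        obtain ⟨p, p', hσ, hτ, hle⟩ := hmem hstep
        exact ⟨p, p', hσ, hτ, hle,
          fun heq => .single (hrestrict hσ (heq ▸ hτ) hstep)⟩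
      | tail hab hbc ih =>
        obtain ⟨p, p'', hσ, hb, hle, hcond⟩ := ih
        obtain ⟨q, p3, hb', hc, hle'⟩ := hmem hbc
        have hq : q = p'' := huniq hb' hb
        rw [hq] at hle'
        refine ⟨p, p3, hσ, hc, le_trans hle' hle, fun heq => ?_⟩
        have hp'' : p'' = p := le_antisymm hle (heq ▸ hle')
        exact (hcond hp'').tail
          (hrestrict (hp'' ▸ hb) (heq ▸ hc) hbc)
    intro σ hcyc
    obtain ⟨p, p', hσ, hσ', hle, hcond⟩ := key hcyc
    exact (hA p).2 σ (hcond (huniq hσ' hσ))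
end

section
/- Let m_1, …, m_q be square-free monomials in k[x_1,…,x_n] ordered so that for each i ∈ {1,…,q} with i > 1 there exists a variable x with x ∤ m_i and x ∣ m_j for all j < i. If a = (a_1,…,a_q) and b = (b_1,…,b_q) are tuples of nonnegative integers with a_1 + ⋯ + a_q = b_1 + ⋯ + b_q = r > 0, then m_1^{a_1}⋯m_q^{a_q} = m_1^{b_1}⋯m_q^{b_q} implies a = b. -/
/-!
Monomials are exponent vectors, so the product `m₁^a₁ ⋯ m_q^a_q` is the vector `∑ i, aᵢ • mᵢ`.
The exponents are recovered from the top index down. If `aⱼ = bⱼ` for all `j > i`, then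
evaluating the two exponent vectors at a variable `x` that is free for `mᵢ` (absent from `mᵢ`,
present in every earlier `mⱼ`) gives `∑_{j<i} aⱼ = ∑_{j<i} bⱼ`; for `i = 0` this sum is empty.
Subtracting both head and tail from `∑ aⱼ = r = ∑ bⱼ` leaves `aᵢ = bᵢ`.
-/

open Finset

section SplitSum

variable {ι M : Type*} [LinearOrder ι] [Fintype ι] [LocallyFiniteOrderBot ι]
  [LocallyFiniteOrderTop ι]

theorem sum_eq_sum_Iio_add_add_sum_Ioi [AddCommMonoid M] (f : ι → M) (i : ι) :
    ∑ j, f j = ∑ j ∈ Iio i, f j + f i + ∑ j ∈ Ioi i, f j := by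
  have hi : i ∈ univ.filter (¬ · < i) := by simp
  have hIio : univ.filter (· < i) = Iio i := by ext; simp
  have hIoi : (univ.filter (¬ · < i)).erase i = Ioi i := by ext; grind
  rw [← sum_filter_add_sum_filter_not univ (· < i), ← add_sum_erase _ _ hi, hIio, hIoi, add_assoc]

theorem eq_of_sum_eq_of_sum_Iio_eq_of_sum_Ioi_eq [AddCancelCommMonoid M] {f g : ι → M} {i : ι}
    (hsum : ∑ j, f j = ∑ j, g j) (hIio : ∑ j ∈ Iio i, f j = ∑ j ∈ Iio i, g j)
    (hIoi : ∑ j ∈ Ioi i, f j = ∑ j ∈ Ioi i, g j) : f i = g i := by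
  rw [sum_eq_sum_Iio_add_add_sum_Ioi f i, sum_eq_sum_Iio_add_add_sum_Ioi g i, hIio, hIoi] at hsum
  exact add_left_cancel (add_right_cancel hsum)

theorem sum_mul_eq_sum_Iio_add_of_free (a c : ι → ℕ) {i : ι} (hci : c i = 0)
    (hc : ∀ j < i, c j = 1) :
    ∑ j, a j * c j = ∑ j ∈ Iio i, a j + ∑ j ∈ Ioi i, a j * c j := by
  rw [sum_eq_sum_Iio_add_add_sum_Ioi, hci, mul_zero, add_zero]
  congr 1
  exact sum_congr rfl fun j hj => by rw [hc j (mem_Iio.mp hj), mul_one]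

theorem sum_Iio_eq_of_free {a b c : ι → ℕ} {i : ι} (hci : c i = 0) (hc : ∀ j < i, c j = 1)
    (habove : ∀ j > i, a j = b j) (heq : ∑ j, a j * c j = ∑ j, b j * c j) :
    ∑ j ∈ Iio i, a j = ∑ j ∈ Iio i, b j := by
  have htail : ∑ j ∈ Ioi i, a j * c j = ∑ j ∈ Ioi i, b j * c j :=
    sum_congr rfl fun j hj => by rw [habove j (mem_Ioi.mp hj)]
  rw [sum_mul_eq_sum_Iio_add_of_free a c hci hc, sum_mul_eq_sum_Iio_add_of_free b c hci hc,
    htail] at heq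
  exact add_right_cancel heq

end SplitSum

theorem stmt4_general (n q r : ℕ) (m : Fin q → Fin n → ℕ)
    (horder : ∀ i : Fin q, (i : ℕ) ≠ 0 →
      ∃ x : Fin n, m i x = 0 ∧ ∀ j < i, m j x = 1)
    (a b : Fin q → ℕ) (ha : ∑ i, a i = r) (hb : ∑ i, b i = r)
    (heq : ∀ x : Fin n, ∑ i, a i * m i x = ∑ i, b i * m i x) :
    a = b := by
  funext i
  induction i using WellFoundedGT.induction with
  | _ i habove =>
  have hIio : ∑ j ∈ Iio i, a j = ∑ j ∈ Iio i, b j := by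
    by_cases hi : (i : ℕ) = 0
    · have hempty : Iio i = ∅ := by ext j; simp [Fin.lt_def, hi]
      rw [hempty, sum_empty, sum_empty]
    · obtain ⟨x, hx, hfree⟩ := horder i hi
      exact sum_Iio_eq_of_free hx hfree habove (heq x)
  exact eq_of_sum_eq_of_sum_Iio_eq_of_sum_Ioi_eq (ha.trans hb.symm) hIio
    (sum_congr rfl fun j hj => habove j (mem_Ioi.mp hj))

/-- monomials are identified with their exponent vectors
`Fin n → ℕ`; `m i` is the `i`-th square-free generator. Under the free-vertex
ordering condition, equal products `m^a = m^b` with `|a| = |b| = r > 0`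
force `a = b`. -/
theorem stmt4 (n q r : ℕ) (hr : 0 < r) (m : Fin q → Fin n → ℕ)
    (hsf : ∀ i x, m i x ≤ 1)
    (horder : ∀ i : Fin q, (i : ℕ) ≠ 0 →
      ∃ x : Fin n, m i x = 0 ∧ ∀ j < i, m j x = 1)
    (a b : Fin q → ℕ) (ha : ∑ i, a i = r) (hb : ∑ i, b i = r)
    (heq : ∀ x : Fin n, ∑ i, a i * m i x = ∑ i, b i * m i x) :
    a = b :=
  stmt4_general n q r m horder a b ha hb heq
end

section
/- Let F_1, …, F_q be the facets of a simplicial complex Δ on vertex set {x_1,…,x_n}, ordered so that each F_i is a leaf of ⟨F_1,…,F_i⟩, and let τ(i) < i be chosen so that F_{τ(i)} is a joint of F_i in ⟨F_1,…,F_i⟩ (with τ(1)=1). Let m_i = ∏_{x ∈ F_i^c} x, where F_i^c is the complement of F_i in the vertex set. Then for all j < i, m_{τ(i)} divides lcm(m_i, m_j), and moreover lcm(m_i, m_j, m_{τ(i)}) = lcm(m_i, m_j). -/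
open Finset

/-- with facets `F 1, …, F q` ordered so that each `F i` is a leaf
of `⟨F 1, …, F i⟩` with joint `F (τ i)` (so `F i ∩ F j ⊆ F (τ i)` for `j < i`,
and `τ i < i` for `i` not the first index), and `m i` the exponent vector of
`∏_{x ∈ F iᶜ} x`, we have `m (τ i) ∣ lcm (m i) (m j)` and
`lcm (m i) (m j) (m (τ i)) = lcm (m i) (m j)` for all `j < i`
(lcm of monomials being the pointwise max of exponent vectors). -/
theorem stmt5 (n q : ℕ) (F : Fin q → Finset (Fin n)) (τ : Fin q → Fin q)
    (hτ0 : ∀ i : Fin q, (i : ℕ) = 0 → τ i = i)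
    (hτ : ∀ i : Fin q, (i : ℕ) ≠ 0 → τ i < i)
    (hjoint : ∀ i : Fin q, ∀ j < i, F i ∩ F j ⊆ F (τ i))
    (m : Fin q → Fin n → ℕ) (hm : ∀ i x, m i x = if x ∈ F i then 0 else 1)
    (i j : Fin q) (hji : j < i) :
    (∀ x, m (τ i) x ≤ max (m i x) (m j x)) ∧
      (∀ x, max (max (m i x) (m j x)) (m (τ i) x) = max (m i x) (m j x)) := by
  have key : ∀ x, m (τ i) x ≤ max (m i x) (m j x) := by
    intro x
    simp only [hm]
    by_cases hτx : x ∈ F (τ i)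
    · simp [hτx]
    · have : x ∉ F i ∨ x ∉ F j := by
        by_contra h
        push_neg at h
        exact hτx (hjoint i j hji (mem_inter.mpr h))
      rcases this with h | h <;> simp [h, hτx]
  exact ⟨key, fun x => max_eq_left (key x)⟩
end

section
/- Let I be a square-free monomial ideal of projective dimension one with ordered generators m_1,…,m_q as in the leaf-order construction (so for each i > 1 there is a joint index τ(i) < i with m_{τ(i)} ∣ lcm(m_i, m_j) for all j < i, and there is a variable x with x ∤ m_i and x ∣ m_j for all j < i). Let a, b ∈ ℕ^q with |a| = |b| = r and b ≺ a, and let k = 𝔡(a,b) be the largest index where a and b differ. Then lcm(m^a, m^b, π_k(m^a)) = lcm(m^a, m^b), where m^a = m_1^{a_1}⋯m_q^{a_q} and π_k(m^a) = m^a · m_{τ(k)}/m_k. -/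
open Finset

/-- with square-free generators `m i` (exponent vectors) from the
leaf-order construction, `a, b ∈ ℕ^q` with `|a| = |b| = r` and `b ≺ a` with
largest differing index `k`, one has
`lcm(m^a, m^b, π_k(m^a)) = lcm(m^a, m^b)`, where `π_k(m^a) = m^a·m_{τ k}/m_k`,
i.e. `m^{a + e_{τ k} - e_k}`; lcm is the pointwise max of exponent vectors. -/
theorem stmt8 (n q r : ℕ) (m : Fin q → Fin n → ℕ)
    (hsf : ∀ i x, m i x ≤ 1)
    (τ : Fin q → Fin q)
    (hτ0 : ∀ i : Fin q, (i : ℕ) = 0 → τ i = i)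
    (hτ : ∀ i : Fin q, (i : ℕ) ≠ 0 → τ i < i)
    (hfree : ∀ i : Fin q, (i : ℕ) ≠ 0 →
      ∃ x : Fin n, m i x = 0 ∧ ∀ j < i, m j x = 1)
    (hjoint : ∀ k : Fin q, (k : ℕ) ≠ 0 → ∀ j < k, ∀ x,
      m (τ k) x ≤ max (m k x) (m j x))
    (a b : Fin q → ℕ) (ha : ∑ i, a i = r) (hb : ∑ i, b i = r)
    (k : Fin q) (hk : b k < a k) (hkmax : ∀ s : Fin q, k < s → a s = b s) :
    ∀ x : Fin n,
      max (max (∑ i, a i * m i x) (∑ i, b i * m i x))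
        (∑ i, (a i + (if i = τ k then 1 else 0) - (if i = k then 1 else 0)) * m i x)
      = max (∑ i, a i * m i x) (∑ i, b i * m i x) := by
  intro x
  set f : Fin q → ℕ := fun i => m i x with hf
  set A : ℕ := ∑ i, a i * f i with hA
  set B : ℕ := ∑ i, b i * f i with hB
  set C : ℕ := ∑ i, (a i + (if i = τ k then 1 else 0) - (if i = k then 1 else 0)) * f i
    with hC
  by_cases hτk : τ k = k
  · have hc : ∀ i, (a i + (if i = τ k then 1 else 0) - (if i = k then 1 else 0)) = a i := by
      intro i
      by_cases h : i = k
      · simp [h, hτk]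
      · simp [h, hτk]
    have : C = A := by
      rw [hC, hA]
      exact Finset.sum_congr rfl fun i _ => by rw [hc i]
    rw [this]
    exact max_eq_left (le_max_left A B)
  · have hk0 : (k : ℕ) ≠ 0 := fun h => hτk (hτ0 k h)
    have hττ : τ k < k := hτ k hk0
    have hτne : τ k ≠ k := hτk
    -- key identity: C + f k = A + f (τ k)
    have key : ∀ i : Fin q,
        (a i + (if i = τ k then 1 else 0) - (if i = k then 1 else 0)) * f i
          + (if i = k then f i else 0)
        = a i * f i + (if i = τ k then f i else 0) := by
      intro i
      by_cases h1 : i = k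
      · have hne : i ≠ τ k := by rw [h1]; exact Ne.symm hτne
        simp only [if_neg hne, if_pos h1]
        have hak : a i = (a i - 1) + 1 := by rw [h1]; omega
        rw [Nat.add_zero]
        conv_rhs => rw [hak]
        ring
      · by_cases h2 : i = τ k
        · simp only [if_pos h2, if_neg h1]
          rw [Nat.sub_zero]; ring
        · simp only [if_neg h1, if_neg h2]
          simp
    have hCk : C + f k = A + f (τ k) := by
      have h1 : ∑ i, ((a i + (if i = τ k then 1 else 0) - (if i = k then 1 else 0)) * f i
          + (if i = k then f i else 0))
          = ∑ i, (a i * f i + (if i = τ k then f i else 0)) :=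
        Finset.sum_congr rfl fun i _ => key i
      rw [Finset.sum_add_distrib, Finset.sum_add_distrib] at h1
      rw [Finset.sum_ite_eq' Finset.univ k f, Finset.sum_ite_eq' Finset.univ (τ k) f] at h1
      simpa using h1
    by_cases hle : f (τ k) ≤ f k
    · have hCA : C ≤ A := by omega
      exact max_eq_left (le_trans hCA (le_max_left A B))
    · push_neg at hle
      have hfk0 : f k = 0 := by have := hsf (τ k) x; simp only [hf] at *; omega
      have hfτ1 : f (τ k) = 1 := by have := hsf (τ k) x; simp only [hf] at *; omega
      have hfj : ∀ j, j < k → f j = 1 := by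
        intro j hj
        have h1 := hjoint k hk0 j hj x
        have h2 := hsf j x
        simp only [hf] at *
        rw [hfτ1, hfk0] at h1
        rw [max_eq_right (Nat.zero_le _)] at h1
        omega
      -- A + 1 ≤ B
      have ea : ∀ i, a i * f i
          = (if i < k then a i else 0) + (if k < i then b i * f i else 0) := by
        intro i
        rcases lt_trichotomy i k with h | h | h
        · simp [h, lt_asymm h, hfj i h]
        · simp [h, hfk0]
        · simp [lt_asymm h, h, hkmax i h]
      have eb : ∀ i, b i * f i
          = (if i < k then b i else 0) + (if k < i then b i * f i else 0) := by
        intro i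
        rcases lt_trichotomy i k with h | h | h
        · simp [h, lt_asymm h, hfj i h]
        · simp [h, hfk0]
        · simp [lt_asymm h, h]
      have ea2 : ∀ i, a i = (if i < k then a i else 0) + (if i = k then a i else 0)
          + (if k < i then b i else 0) := by
        intro i
        rcases lt_trichotomy i k with h | h | h
        · simp [h, lt_asymm h, ne_of_lt h]
        · simp [h]
        · simp [lt_asymm h, h, ne_of_gt h, hkmax i h]
      have eb2 : ∀ i, b i = (if i < k then b i else 0) + (if i = k then b i else 0)
          + (if k < i then b i else 0) := by
        intro i
        rcases lt_trichotomy i k with h | h | h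
        · simp [h, lt_asymm h, ne_of_lt h]
        · simp [h]
        · simp [lt_asymm h, h, ne_of_gt h]
      have hsa : ∑ i, a i = (∑ i, if i < k then a i else 0) + a k
          + ∑ i, if k < i then b i else 0 := by
        calc ∑ i, a i = ∑ i, ((if i < k then a i else 0) + (if i = k then a i else 0)
            + (if k < i then b i else 0)) := Finset.sum_congr rfl fun i _ => ea2 i
          _ = _ := by
            rw [Finset.sum_add_distrib, Finset.sum_add_distrib,
              Finset.sum_ite_eq' Finset.univ k a]
            simp
      have hsb : ∑ i, b i = (∑ i, if i < k then b i else 0) + b k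
          + ∑ i, if k < i then b i else 0 := by
        calc ∑ i, b i = ∑ i, ((if i < k then b i else 0) + (if i = k then b i else 0)
            + (if k < i then b i else 0)) := Finset.sum_congr rfl fun i _ => eb2 i
          _ = _ := by
            rw [Finset.sum_add_distrib, Finset.sum_add_distrib,
              Finset.sum_ite_eq' Finset.univ k b]
            simp
      have hSab : (∑ i, if i < k then a i else 0) + 1 ≤ ∑ i, if i < k then b i else 0 := by
        omega
      have hAeq : A = (∑ i, if i < k then a i else 0)
          + ∑ i, if k < i then b i * f i else 0 := by
        rw [hA]
        calc ∑ i, a i * f i = ∑ i, ((if i < k then a i else 0)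
            + (if k < i then b i * f i else 0)) := Finset.sum_congr rfl fun i _ => ea i
          _ = _ := Finset.sum_add_distrib
      have hBeq : B = (∑ i, if i < k then b i else 0)
          + ∑ i, if k < i then b i * f i else 0 := by
        rw [hB]
        calc ∑ i, b i * f i = ∑ i, ((if i < k then b i else 0)
            + (if k < i then b i * f i else 0)) := Finset.sum_congr rfl fun i _ => eb i
          _ = _ := Finset.sum_add_distrib
      have hAB : A + 1 ≤ B := by omega
      have hCB : C ≤ B := by omega
      exact max_eq_left (le_trans hCB (le_max_right A B))
end

section
/- Let a, b, c ∈ ℕ^q with |a| = |b| = |c| = r, and let τ satisfy τ(1)=1, τ(i) < i for i > 1. Suppose b = π_{L'}(a) and c = π_L(a) for subsets L, L' ⊆ Supp(a) \ {1} (where π_L(a) = a + Σ_{i∈L} e_{τ(i)} − Σ_{i∈L} e_i), with L ≠ L'. Let k = max((L ∪ L') \ (L ∩ L')). Then c ≺ b if and only if k ∈ L, and in that case 𝔡(b, c) = k. -/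
open Finset

/-- let `b = π_{L'}(a)` and `c = π_L(a)` for
`L, L' ⊆ Supp(a) \ {1}` with `L ≠ L'` (working with integer vectors, where
`π_L(a) = a + Σ_{i∈L} e_{τ i} - Σ_{i∈L} e_i`), and let `k` be the largest
element of the symmetric difference of `L` and `L'`. Then `c ≺ b` iff `k ∈ L`,
and in that case the largest index where `b` and `c` differ is `k`. -/
theorem stmt10 (q r : ℕ) (τ : Fin q → Fin q)
    (hτ0 : ∀ i : Fin q, (i : ℕ) = 0 → τ i = i)
    (hτ : ∀ i : Fin q, (i : ℕ) ≠ 0 → τ i < i)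
    (a : Fin q → ℤ) (ha : ∀ i, 0 ≤ a i) (har : ∑ i, a i = (r : ℤ))
    (L L' : Finset (Fin q))
    (hL : ∀ i ∈ L, a i ≠ 0 ∧ (i : ℕ) ≠ 0)
    (hL' : ∀ i ∈ L', a i ≠ 0 ∧ (i : ℕ) ≠ 0)
    (b c : Fin q → ℤ)
    (hb : ∀ t, b t = a t + ((L'.filter fun i => τ i = t).card : ℤ)
      - (if t ∈ L' then 1 else 0))
    (hc : ∀ t, c t = a t + ((L.filter fun i => τ i = t).card : ℤ)
      - (if t ∈ L then 1 else 0))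
    (hbr : ∑ i, b i = (r : ℤ)) (hcr : ∑ i, c i = (r : ℤ))
    (hLL' : L ≠ L')
    (k : Fin q) (hk : k ∈ (L ∪ L') \ (L ∩ L'))
    (hkmax : ∀ s ∈ (L ∪ L') \ (L ∩ L'), s ≤ k) :
    ((∃ t : Fin q, c t < b t ∧ ∀ s : Fin q, t < s → c s = b s) ↔ k ∈ L) ∧
      (k ∈ L → b k ≠ c k ∧ ∀ s : Fin q, k < s → b s = c s) := by
  have hmem : ∀ s : Fin q, k < s → (s ∈ L ↔ s ∈ L') := by
    intro s hs
    by_contra h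
    have hsk : s ∈ (L ∪ L') \ (L ∩ L') := by
      simp only [mem_sdiff, mem_union, mem_inter]
      tauto
    exact absurd (hkmax s hsk) (not_le.mpr hs)
  have hfilt : ∀ s : Fin q, k ≤ s →
      (L.filter fun i => τ i = s) = (L'.filter fun i => τ i = s) := by
    intro s hs
    ext i
    simp only [mem_filter]
    constructor
    · rintro ⟨hi, hτi⟩
      have hki : k < i := lt_of_le_of_lt hs (hτi ▸ hτ i (hL i hi).2)
      exact ⟨(hmem i hki).mp hi, hτi⟩
    · rintro ⟨hi, hτi⟩
      have hki : k < i := lt_of_le_of_lt hs (hτi ▸ hτ i (hL' i hi).2)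
      exact ⟨(hmem i hki).mpr hi, hτi⟩
  have heq : ∀ s : Fin q, k < s → b s = c s := by
    intro s hs
    rw [hb, hc, hfilt s hs.le]
    have h := hmem s hs
    by_cases h1 : s ∈ L
    · simp [h1, h.mp h1]
    · simp [h1, show s ∉ L' from fun hh => h1 (h.mpr hh)]
  simp only [mem_sdiff, mem_union, mem_inter] at hk
  obtain ⟨hkU, hkI⟩ := hk
  have hbk : k ∈ L → b k - c k = 1 := by
    intro hkL
    have hkL' : k ∉ L' := fun hh => hkI ⟨hkL, hh⟩
    rw [hb, hc, hfilt k le_rfl]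
    simp [hkL, hkL']
  have hck : k ∉ L → c k - b k = 1 := by
    intro hkL
    have hkL' : k ∈ L' := hkU.resolve_left hkL
    rw [hb, hc, hfilt k le_rfl]
    simp [hkL, hkL']
  constructor
  · constructor
    · rintro ⟨t, htlt, hts⟩
      by_contra hkL
      have hck' := hck hkL
      rcases lt_trichotomy t k with h | h | h
      · have := hts k h; omega
      · subst h; omega
      · have := heq t h; omega
    · intro hkL
      refine ⟨k, ?_, fun s hs => (heq s hs).symm⟩
      have := hbk hkL; omega
  · intro hkL
    refine ⟨?_, fun s hs => heq s hs⟩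
    have := hbk hkL; omega
end

section
/- Let τ : {1,…,q} → {1,…,q} with τ(1) = 1 and τ(i) < i for i > 1, let a ∈ ℕ^q, let L, L' ⊆ Supp(a) with d ∉ L, d ∈ Supp(π_L(a)), and suppose π_d(π_L(a)) = π_{L'}(a) with L ∩ L' = ∅ (as an equality of integer vectors, i.e., Σ_{i∈L∪{d}} e_i − Σ_{i∈L∪{d}} e_{τ(i)} = Σ_{i∈L'} e_i − Σ_{i∈L'} e_{τ(i)}). Then d ∈ L'. -/
open Finset

/-- with `τ 0 = 0` and `τ i < i` otherwise, `d ∉ L`,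
`d` not the first index (as `d ∈ D' ⊆ Supp \ {1}` in the paper),
`d ∈ Supp(π_L(a))`, `L ∩ L' = ∅`, and the integer-vector identity
`Σ_{i ∈ L∪{d}} (e_i - e_{τ i}) = Σ_{i ∈ L'} (e_i - e_{τ i})`
(expressing `π_d(π_L(a)) = π_{L'}(a)`), we get `d ∈ L'`. -/
theorem stmt11 (q : ℕ) (τ : Fin q → Fin q)
    (hτ0 : ∀ i : Fin q, (i : ℕ) = 0 → τ i = i)
    (hτ : ∀ i : Fin q, (i : ℕ) ≠ 0 → τ i < i)
    (a : Fin q → ℤ) (L L' : Finset (Fin q))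
    (hL : ∀ i ∈ L, a i ≠ 0) (hL' : ∀ i ∈ L', a i ≠ 0)
    (d : Fin q) (hd0 : (d : ℕ) ≠ 0) (hdL : d ∉ L)
    (hdsupp : a d + ((L.filter fun i => τ i = d).card : ℤ)
      - (if d ∈ L then 1 else 0) ≠ 0)
    (hdisj : Disjoint L L')
    (heq : ∀ t : Fin q,
      (∑ i ∈ insert d L, ((if t = i then (1 : ℤ) else 0) - (if t = τ i then 1 else 0)))
        = ∑ i ∈ L', ((if t = i then (1 : ℤ) else 0) - (if t = τ i then 1 else 0))) :
    d ∈ L' := by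
  classical
  have hdS : d ∈ insert d L ∪ L' := by simp
  have hne : (insert d L ∪ L').Nonempty := ⟨d, hdS⟩
  set M := (insert d L ∪ L').max' hne with hMdef
  have hdM : (d : ℕ) ≤ (M : ℕ) := Finset.le_max' _ d hdS
  have hM0 : (M : ℕ) ≠ 0 := by omega
  have key : ∀ T : Finset (Fin q), (∀ i ∈ T, (i : ℕ) ≤ (M : ℕ)) →
      (∑ i ∈ T, ((if M = i then (1 : ℤ) else 0) - (if M = τ i then 1 else 0)))
        = if M ∈ T then 1 else 0 := by
    intro T hT
    rw [Finset.sum_sub_distrib, Finset.sum_ite_eq]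
    have hz : (∑ i ∈ T, (if M = τ i then (1 : ℤ) else 0)) = 0 := by
      apply Finset.sum_eq_zero
      intro i hi
      have hiM := hT i hi
      by_cases h0 : (i : ℕ) = 0
      · rw [hτ0 i h0]
        have hne' : M ≠ i := by
          intro h; apply hM0; rw [h]; exact h0
        simp [hne']
      · have hlt : (τ i : ℕ) < (i : ℕ) := hτ i h0
        have hne' : M ≠ τ i := by
          intro h
          have : (M : ℕ) = (τ i : ℕ) := by rw [h]
          omega
        simp [hne']
    rw [hz, sub_zero]
  have h1 := heq M
  rw [key (insert d L) (fun i hi => Finset.le_max' _ i (Finset.mem_union_left _ hi)),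
      key L' (fun i hi => Finset.le_max' _ i (Finset.mem_union_right _ hi))] at h1
  have hiff : M ∈ insert d L ↔ M ∈ L' := by
    by_cases h : M ∈ insert d L <;> by_cases h' : M ∈ L' <;> simp [h, h'] at h1 ⊢
  have hMU := Finset.max'_mem _ hne
  rw [Finset.mem_union] at hMU
  have hML' : M ∈ L' := by
    rcases hMU with h | h
    · exact hiff.mp h
    · exact h
  have hMdL : M ∈ insert d L := hiff.mpr hML'
  rcases Finset.mem_insert.mp hMdL with h | h
  · rwa [h] at hML'
  · exact absurd hML' (Finset.disjoint_left.mp hdisj h)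
end

section
/- Let m_1,…,m_q be as in the leaf-order construction (m_i = ∏_{x ∈ F_i^c} x for a facet order with joints τ(i)). For a ∈ ℕ^q with |a| = r, D ⊆ Supp(a) \ {1}, define σ(m^a, D) = {m^a} ∪ {π_j(m^a) : j ∈ D}, where π_j(m^a) = m^a · m_{τ(j)}/m_j. Then lcm σ(m^a, D) = m^a · ∏_{j ∈ D} ∏_{x ∈ F_j \ F_{τ(j)}} x. -/
open Finset

/-- in the leaf-order setting, for `a ∈ ℕ^q` with `|a| = r` and
`D ⊆ Supp(a) \ {1}`, the lcm of `σ(m^a, D) = {m^a} ∪ {π_j(m^a) : j ∈ D}`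
(pointwise max of exponent vectors, with `π_j(m^a) = m^a · m_{τ j} / m_j`)
equals `m^a · ∏_{j∈D} ∏_{x ∈ F j \ F (τ j)} x`. -/
theorem stmt14 (n q r : ℕ) (F : Fin q → Finset (Fin n)) (τ : Fin q → Fin q)
    (hτ0 : ∀ i : Fin q, (i : ℕ) = 0 → τ i = i)
    (hτ : ∀ i : Fin q, (i : ℕ) ≠ 0 → τ i < i)
    (hjoint : ∀ i : Fin q, ∀ j < i, F i ∩ F j ⊆ F (τ i))
    (hfacets : ∀ i j : Fin q, i ≠ j → ¬ F i ⊆ F j)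
    (m : Fin q → Fin n → ℕ) (hm : ∀ i x, m i x = if x ∈ F i then 0 else 1)
    (a : Fin q → ℕ) (ha : ∑ i, a i = r)
    (D : Finset (Fin q)) (hD : ∀ j ∈ D, a j ≠ 0 ∧ (j : ℕ) ≠ 0) :
    ∀ x : Fin n,
      max (∑ i, a i * m i x)
        (D.sup fun j => ∑ i, a i * m i x + m (τ j) x - m j x)
      = (∑ i, a i * m i x) +
          (D.filter fun j => x ∈ F j ∧ x ∉ F (τ j)).card := by
  intro x
  set S := ∑ i, a i * m i x with hS
  by_cases hex : ∃ j ∈ D, x ∈ F j ∧ x ∉ F (τ j)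
  · obtain ⟨j0, hj0D, hj0⟩ := hex
    have hcard : (D.filter fun j => x ∈ F j ∧ x ∉ F (τ j)).card = 1 := by
      rw [Finset.card_eq_one]
      refine ⟨j0, ?_⟩
      ext k
      simp only [Finset.mem_filter, Finset.mem_singleton]
      constructor
      · rintro ⟨hkD, hk1, hk2⟩
        by_contra hne
        rcases lt_or_gt_of_ne hne with h | h
        · exact hj0.2 (hjoint j0 k h (Finset.mem_inter.mpr ⟨hj0.1, hk1⟩))
        · exact hk2 (hjoint k j0 h (Finset.mem_inter.mpr ⟨hk1, hj0.1⟩))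
      · rintro rfl; exact ⟨hj0D, hj0.1, hj0.2⟩
    rw [hcard]
    have hterm : S + m (τ j0) x - m j0 x = S + 1 := by
      rw [hm, hm]
      simp [hj0.1, hj0.2]
    have h1 : D.sup (fun j => S + m (τ j) x - m j x) = S + 1 := by
      apply le_antisymm
      · apply Finset.sup_le
        intro j hj
        have : m (τ j) x ≤ 1 := by rw [hm]; split <;> simp
        omega
      · rw [← hterm]; exact Finset.le_sup (f := fun j => S + m (τ j) x - m j x) hj0D
    rw [h1]; omega
  · have hcard : (D.filter fun j => x ∈ F j ∧ x ∉ F (τ j)).card = 0 := by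
      rw [Finset.card_eq_zero, Finset.filter_eq_empty_iff]
      intro j hj hP
      exact hex ⟨j, hj, hP⟩
    rw [hcard]
    have h1 : D.sup (fun j => S + m (τ j) x - m j x) ≤ S := by
      apply Finset.sup_le
      intro j hj
      have hmj := hm j x
      have hmτ := hm (τ j) x
      by_cases hx : x ∈ F j
      · have hxt : x ∈ F (τ j) := by
          by_contra h; exact hex ⟨j, hj, hx, h⟩
        simp only [hx, hxt, if_pos] at hmj hmτ
        omega
      · have h1 : m j x = 1 := by rw [hmj]; simp [hx]
        have h2 : m (τ j) x ≤ 1 := by rw [hmτ]; split <;> simp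
        omega
    omega
end

section
/- Let I be an ideal generated by q square-free monomials of projective dimension one in a polynomial ring S, with minimal free resolution of I^r supported on the Morse complex whose i-cells correspond to pairs (a, D) with a ∈ ℕ^q, |a| = r, D ⊆ Supp(a) \ {1}, |D| = i. Then pd_S(I^r) = q − 1 if r ≥ q − 1 and pd_S(I^r) = r if r < q − 1. -/
open Finset

/-- the projective dimension of `I^r`, for `I` a square-free
monomial ideal of projective dimension one with `q` generators. Given the fact
(from the minimal Morse resolution) that `pd_S(I^r) = p` is the greatest `i`
such that the `i`-th Betti index set
`{(a, D) : a ∈ ℕ^q, |a| = r, D ⊆ Supp(a) \ {1}, |D| = i}` is nonempty,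
we have `pd_S(I^r) = q - 1` if `r ≥ q - 1` and `pd_S(I^r) = r` otherwise. -/
theorem stmt17 (q r p : ℕ) (hq : 1 ≤ q) (hr : 1 ≤ r)
    (hp : IsGreatest
      {i : ℕ | ∃ (a : Fin q → ℕ) (D : Finset (Fin q)),
        (∑ j, a j) = r ∧ (∀ j ∈ D, (j : ℕ) ≠ 0 ∧ a j ≠ 0) ∧ D.card = i} p) :
    p = if q - 1 ≤ r then q - 1 else r := by
  obtain ⟨hmem, hub⟩ := hp
  set m := min (q - 1) r with hm
  have hm1 : m ≤ q - 1 := min_le_left _ _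
  have hm2 : m ≤ r := min_le_right _ _
  -- upper bound: p ≤ m
  have hple : p ≤ m := by
    obtain ⟨a, D, hsum, hD, hcard⟩ := hmem
    have h1 : p ≤ q - 1 := by
      have hz : (⟨0, hq⟩ : Fin q) ∈ (univ : Finset (Fin q)) := mem_univ _
      have hsub : D ⊆ univ.erase ⟨0, hq⟩ := by
        intro j hj
        refine mem_erase.mpr ⟨?_, mem_univ _⟩
        intro hjeq
        exact (hD j hj).1 (by simp [hjeq])
      calc p = D.card := hcard.symm
        _ ≤ (univ.erase (⟨0, hq⟩ : Fin q)).card := card_le_card hsub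
        _ = q - 1 := by rw [card_erase_of_mem hz, card_univ, Fintype.card_fin]
    have h2 : p ≤ r := by
      have hle : ∑ j ∈ D, a j ≤ ∑ j, a j :=
        Finset.sum_le_sum_of_subset (subset_univ D)
      calc p = D.card := hcard.symm
        _ ≤ ∑ j ∈ D, a j := by
            refine Finset.card_nsmul_le_sum D a 1 ?_ |>.trans_eq' (by simp)
            intro j hj
            exact Nat.one_le_iff_ne_zero.mpr (hD j hj).2
        _ ≤ r := hsum ▸ hle
    omega
  -- membership: m is attained
  have hmmem : m ∈ {i : ℕ | ∃ (a : Fin q → ℕ) (D : Finset (Fin q)),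
        (∑ j, a j) = r ∧ (∀ j ∈ D, (j : ℕ) ≠ 0 ∧ a j ≠ 0) ∧ D.card = i} := by
    set f : ℕ → ℕ := fun k => if k = 0 then r - m else if k ≤ m then 1 else 0 with hf
    refine ⟨fun j => f j, Finset.attachFin ((Finset.range m).image (· + 1)) ?_, ?_, ?_, ?_⟩
    · intro x hx
      simp only [mem_image, mem_range] at hx
      obtain ⟨k, hk, rfl⟩ := hx
      omega
    · have h1 : (∑ j : Fin q, f j) = ∑ k ∈ Finset.range q, f k :=
        Fin.sum_univ_eq_sum_range f q
      have h2 : (∑ k ∈ Finset.range q, f k) = ∑ k ∈ Finset.range (m + 1), f k := by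
        refine (Finset.sum_subset (Finset.range_subset_range.mpr (by omega)) ?_).symm
        intro x hx hx2
        simp only [mem_range] at hx hx2
        simp only [hf]
        rw [if_neg (by omega), if_neg (by omega)]
      rw [h1, h2, Finset.sum_range_succ']
      have h3 : ∀ k ∈ Finset.range m, f (k + 1) = 1 := by
        intro k hk
        simp only [mem_range] at hk
        simp only [hf]
        rw [if_neg (by omega), if_pos (by omega)]
      rw [Finset.sum_congr rfl h3]
      simp only [hf, if_pos rfl, Finset.sum_const, smul_eq_mul, mul_one, card_range]
      omega
    · intro j hj
      rw [Finset.mem_attachFin, mem_image] at hj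
      obtain ⟨k, hk, hkj⟩ := hj
      simp only [mem_range] at hk
      constructor
      · omega
      · simp only [hf]
        rw [if_neg (by omega), if_pos (by omega)]
        exact one_ne_zero
    · rw [Finset.card_attachFin, Finset.card_image_of_injective _ (add_left_injective 1),
        card_range]
  have hpm : p = m := le_antisymm hple (hub hmmem)
  rw [hpm, hm]
  split <;> omega
end
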